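/- Let G be a simple graph with n ≥ 3 vertices and m edges with m/(n−1) < 3, and let v be a vertex of G of maximum degree Δ(G). Then the number of cycles of G that contain v is at most (Δ(G)/2)·3^{m/3}. -/

import Mathlib

/-- A subgraph of a simple graph is a cycle subgraph if it is connected (hence nonempty)
and every one of its vertices has exactly two neighbours in it. -/
def SimpleGraph.Subgraph.IsCycleSub {V : Type*} {G : SimpleGraph V} (H : G.Subgraph) : Prop :=
  H.coe.Connected ∧ ∀ v ∈ H.verts, (H.neighborSet v).ncard = 2

/-- `C(G)`: the number of cycles in a simple graph `G`, i.e. the number of distinct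
subgraphs of `G` that are cycles. -/
noncomputable def SimpleGraph.cycleCount {V : Type*} (G : SimpleGraph V) : ℕ :=
  {H : G.Subgraph | H.IsCycleSub}.ncard

/-- `C(m)`: the maximum number of cycles in a simple graph with `m` edges. -/
noncomputable def maxCycles (m : ℕ) : ℕ :=
  sSup {c : ℕ | ∃ (n : ℕ) (G : SimpleGraph (Fin n)), G.edgeSet.ncard = m ∧ c = G.cycleCount}

/-!
A path from `a` to `b ≠ a` leaves `a` along one of its `d = deg a` edges and then never returns to
`a`, so it is an edge at `a` followed by a path in `G` minus the `d` edges at `a`. By induction on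
the number of edges, the number of `a`–`b` paths is at most `d · 3^((m - d)/3) ≤ 3^(m/3)`, the
last step being `d ≤ 3^(d/3)`. A cycle through `v`, read from `v` in either direction, is an edge
`vx` followed by an `x`–`v` path avoiding that edge, so there are at most `deg v · 3^(m/3)` such
cycle walks; each cycle subgraph through `v` yields two of them.
-/

theorem Nat.cube_le_three_pow (n : ℕ) : n ^ 3 ≤ 3 ^ n := by
  induction n with
  | zero => norm_num
  | succ k ih =>
    rcases Nat.lt_or_ge k 3 with hk | hk
    · interval_cases k <;> norm_num
    · calc (k + 1) ^ 3 ≤ 3 * k ^ 3 := by nlinarith [sq_nonneg k]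
        _ ≤ 3 * 3 ^ k := Nat.mul_le_mul_left 3 ih
        _ = 3 ^ (k + 1) := by ring

theorem natCast_le_three_rpow_div_three (n : ℕ) : (n : ℝ) ≤ 3 ^ ((n : ℝ) / 3) := by
  have h : (n : ℝ) ^ (3 : ℝ) ≤ ((3 : ℝ) ^ ((n : ℝ) / 3)) ^ (3 : ℝ) := by
    rw [← Real.rpow_mul (by norm_num), div_mul_cancel₀ _ (by norm_num)]
    exact_mod_cast n.cube_le_three_pow
  exact (Real.rpow_le_rpow_iff (by positivity) (by positivity) (by norm_num)).mp h

theorem natCast_mul_three_rpow_sub_le (d : ℕ) (m : ℝ) :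
    d * (3 : ℝ) ^ ((m - d) / 3) ≤ 3 ^ (m / 3) :=
  calc d * (3 : ℝ) ^ ((m - d) / 3) ≤ 3 ^ ((d : ℝ) / 3) * 3 ^ ((m - d) / 3) := by
        gcongr; exact natCast_le_three_rpow_div_three d
    _ = 3 ^ (m / 3) := by rw [← Real.rpow_add (by norm_num)]; ring_nf

namespace SimpleGraph

variable {V : Type*} {G : SimpleGraph V}

instance [Finite V] {u v : V} : Finite (G.Path u v) := by
  classical
  have := Fintype.ofFinite V
  infer_instance

theorem Walk.injective_snd_tail {u b : V} :
    Function.Injective fun w : {w : G.Walk u b // ¬ w.Nil} =>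
      (⟨w.1.snd, w.1.tail⟩ : Σ x, G.Walk x b) := by
  classical
  let consIfAdj : (Σ x, G.Walk x b) → Option (G.Walk u b) := fun t =>
    if h : G.Adj u t.1 then some (cons h t.2) else none
  have hcons (w : {w : G.Walk u b // ¬ w.Nil}) : consIfAdj ⟨w.1.snd, w.1.tail⟩ = some w.1 := by
    simp [consIfAdj, w.1.adj_snd w.2, w.1.cons_tail_eq w.2]
  intro w₁ w₂ h
  exact Subtype.ext <| Option.some_injective _ <|
    (hcons w₁).symm.trans ((congrArg consIfAdj h).trans (hcons w₂))

theorem card_le_degree_mul_of_isPath_tail [Fintype V] [DecidableRel G.Adj] {u b : V}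
    (P : G.Walk u b → Prop) (H : V → SimpleGraph V) (hH : ∀ x, H x ≤ G)
    (hP : ∀ w, P w → ¬ w.Nil ∧ w.tail.IsPath ∧ ∀ e ∈ w.tail.edges, e ∈ (H w.snd).edgeSet)
    {C : ℝ} (hC : ∀ x, G.Adj u x → (Nat.card ((H x).Path x b) : ℝ) ≤ C) :
    (Nat.card {w // P w} : ℝ) ≤ G.degree u * C := by
  let split (w : {w // P w}) : Σ x : G.neighborSet u, (H x).Path x b :=
    ⟨⟨w.1.snd, w.1.adj_snd (hP w.1 w.2).1⟩,
      ⟨w.1.tail.transfer _ (hP w.1 w.2).2.2, (hP w.1 w.2).2.1.transfer _⟩⟩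
  let forget (t : Σ x : G.neighborSet u, (H x).Path x b) : Σ x, G.Walk x b :=
    ⟨t.1, t.2.1.transfer G fun e he => edgeSet_mono (hH _) (t.2.1.edges_subset_edgeSet he)⟩
  have hsplit : split.Injective := by
    intro w₁ w₂ h
    have h' := congrArg forget h
    simp only [forget, split, Walk.transfer_transfer, Walk.transfer_self] at h'
    exact Subtype.ext <| Subtype.mk.inj <|
      Walk.injective_snd_tail (a₁ := ⟨w₁.1, (hP _ w₁.2).1⟩) (a₂ := ⟨w₂.1, (hP _ w₂.2).1⟩) h'
  calc (Nat.card {w // P w} : ℝ) ≤ Nat.card (Σ x : G.neighborSet u, (H x).Path x b) := by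
        exact_mod_cast Nat.card_le_card_of_injective split hsplit
    _ = ∑ x : G.neighborSet u, (Nat.card ((H x).Path x b) : ℝ) := by
        rw [Nat.card_sigma]; push_cast; rfl
    _ ≤ ∑ _x : G.neighborSet u, C := Finset.sum_le_sum fun x _ => hC x x.2
    _ = G.degree u * C := by
        rw [Finset.sum_const, nsmul_eq_mul, Finset.card_univ, card_neighborSet_eq_degree]

theorem Walk.IsPath.start_notMem_support_tail {u v : V} {p : G.Walk u v} (hp : p.IsPath)
    (hnil : ¬ p.Nil) : u ∉ p.tail.support := by
  rw [← p.cons_tail_eq hnil, Walk.cons_isPath_iff] at hp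
  exact hp.2

theorem ncard_edgeSet_deleteIncidenceSet [Fintype V] [DecidableRel G.Adj] (a : V) :
    (G.deleteIncidenceSet a).edgeSet.ncard = G.edgeSet.ncard - G.degree a := by
  classical
  rw [← coe_edgeFinset, ← coe_edgeFinset, Set.ncard_coe_finset, Set.ncard_coe_finset,
    card_edgeFinset_deleteIncidenceSet]

theorem card_path_le_three_rpow [Finite V] (G : SimpleGraph V) (a b : V) :
    (Nat.card (G.Path a b) : ℝ) ≤ 3 ^ ((G.edgeSet.ncard : ℝ) / 3) := by
  classical
  have := Fintype.ofFinite V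
  induction hm : G.edgeSet.ncard using Nat.strong_induction_on generalizing G a with
  | _ m ih =>
  by_cases hab : a = b
  · subst hab
    have : Subsingleton (G.Path a a) := ⟨fun p q => p.loop_eq.trans q.loop_eq.symm⟩
    calc (Nat.card (G.Path a a) : ℝ) ≤ 1 := by
          exact_mod_cast Finite.card_le_one_iff_subsingleton.mpr this
      _ ≤ _ := Real.one_le_rpow (by norm_num) (by positivity)
  have hdeg : G.degree a ≤ m := hm ▸ by
    simpa [← coe_edgeFinset, Set.ncard_coe_finset] using G.degree_le_card_edgeFinset (v := a)
  calc (Nat.card (G.Path a b) : ℝ) ≤ G.degree a * 3 ^ (((m : ℝ) - G.degree a) / 3) := by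
        refine card_le_degree_mul_of_isPath_tail (fun w => w.IsPath)
          (fun _ => G.deleteIncidenceSet a) (fun _ => G.deleteIncidenceSet_le a) ?_ ?_
        · intro w hw
          have hnil : ¬ w.Nil := Walk.not_nil_of_ne hab
          refine ⟨hnil, hw.tail, fun e he => ?_⟩
          rw [edgeSet_deleteIncidenceSet]
          exact ⟨w.tail.edges_subset_edgeSet he, fun ha =>
            hw.start_notMem_support_tail hnil (Walk.mem_support_of_mem_edges he ha.2)⟩
        · intro x hx
          have hpos : 0 < G.degree a := G.degree_pos_iff_exists_adj a |>.mpr ⟨x, hx⟩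
          have hlt : (G.deleteIncidenceSet a).edgeSet.ncard < m := by
            rw [ncard_edgeSet_deleteIncidenceSet, hm]; omega
          have := ih _ hlt (G.deleteIncidenceSet a) x rfl
          rwa [ncard_edgeSet_deleteIncidenceSet, hm, Nat.cast_sub hdeg] at this
    _ ≤ _ := natCast_mul_three_rpow_sub_le _ _

theorem Walk.IsCycle.mk_start_snd_notMem_edges_tail {v : V} {w : G.Walk v v} (hw : w.IsCycle) :
    s(v, w.snd) ∉ w.tail.edges := by
  rw [← w.cons_tail_eq hw.not_nil, Walk.cons_isCycle_iff] at hw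
  exact hw.2

instance [Finite V] {v : V} : Finite {w : G.Walk v v // w.IsCycle} := by
  classical
  have := Fintype.ofFinite V
  refine Finite.of_injective (β := {p : G.Walk v v // p.length < G.edgeFinset.card + 1})
    (fun w => ⟨w.1, Nat.lt_succ_of_le w.2.isTrail.length_le_card_edgeFinset⟩) fun w₁ w₂ h => ?_
  exact Subtype.ext (Subtype.mk.inj h)

theorem card_isCycle_le_degree_mul_three_rpow [Fintype V] [DecidableRel G.Adj] (v : V) :
    (Nat.card {w : G.Walk v v // w.IsCycle} : ℝ) ≤
      G.degree v * 3 ^ ((G.edgeSet.ncard : ℝ) / 3) := by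
  refine card_le_degree_mul_of_isPath_tail _ (fun x => G.deleteEdges {s(v, x)})
    (fun x => G.deleteEdges_le _) (fun w hw => ⟨hw.not_nil, hw.isPath_tail, fun e he => ?_⟩)
    fun x _ => (card_path_le_three_rpow _ x v).trans ?_
  · rw [edgeSet_deleteEdges]
    exact ⟨w.tail.edges_subset_edgeSet he,
      fun h => hw.mk_start_snd_notMem_edges_tail (Set.mem_singleton_iff.mp h ▸ he)⟩
  · rw [edgeSet_deleteEdges]
    gcongr
    exacts [by norm_num, G.edgeSet.toFinite, Set.sdiff_subset]

theorem Walk.IsCycle.reverse_ne {v : V} {w : G.Walk v v} (hw : w.IsCycle) : w.reverse ≠ w :=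
  fun h => hw.snd_ne_penultimate (by rw [← Walk.snd_reverse, h])

theorem Subgraph.ncard_coe_neighborSet (H : G.Subgraph) (x : H.verts) :
    (H.coe.neighborSet x).ncard = (H.neighborSet x).ncard := by
  rw [← Nat.card_coe_set_eq, ← Nat.card_coe_set_eq]
  exact Nat.card_congr (H.coeNeighborSetEquiv x)

theorem Subgraph.IsCycleSub.exists_isCycle_toSubgraph_eq [Finite V] {H : G.Subgraph}
    (hH : H.IsCycleSub) {v : V} (hv : v ∈ H.verts) :
    ∃ w : G.Walk v v, w.IsCycle ∧ w.toSubgraph = H := by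
  classical
  have := Fintype.ofFinite V
  have hdeg (x : H.verts) : (H.coe.neighborSet x).ncard = 2 := by
    rw [H.ncard_coe_neighborSet, hH.2 x x.2]
  have hcycles : H.coe.IsCycles := fun x _ => hdeg x
  obtain ⟨p, hp, hverts⟩ := hcycles.exists_cycle_toSubgraph_verts_eq_connectedComponentSupp
    (c := H.coe.connectedComponentMk ⟨v, hv⟩) rfl
    (Set.nonempty_of_ncard_ne_zero (by rw [hdeg]; norm_num))
  have hsupp : ∀ y, y ∈ p.toSubgraph.verts := fun y => by
    rw [hverts]
    exact ConnectedComponent.sound (hH.1.preconnected y ⟨v, hv⟩)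
  have htop : p.toSubgraph = ⊤ :=
    eq_top_iff.mpr ⟨fun y _ => hsupp y, fun x y h => (hp.adj_toSubgraph_iff_of_isCycles hcycles
      (hsupp x) y).mpr h⟩
  have hmap : (p.map H.hom).toSubgraph = H := by
    rw [Walk.toSubgraph_map, htop, Subgraph.map_hom_top]
  exact ⟨p.map H.hom, hp.map Subgraph.hom_injective, hmap⟩

theorem two_mul_ncard_isCycleSub_le_card_isCycle [Finite V] (v : V) :
    2 * {H : G.Subgraph | H.IsCycleSub ∧ v ∈ H.verts}.ncard ≤
      Nat.card {w : G.Walk v v // w.IsCycle} := by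
  set S := {H : G.Subgraph | H.IsCycleSub ∧ v ∈ H.verts}
  choose F hF using fun H : S => H.2.1.exists_isCycle_toSubgraph_eq H.2.2
  let orient (t : Bool × S) : {w : G.Walk v v // w.IsCycle} :=
    bif t.1 then ⟨(F t.2).reverse, (hF t.2).1.reverse⟩ else ⟨F t.2, (hF t.2).1⟩
  have hsub (t : Bool × S) : (orient t).1.toSubgraph = t.2 := by
    obtain ⟨_ | _, H⟩ := t
    exacts [(hF H).2, (Walk.toSubgraph_reverse _).trans (hF H).2]
  have horient : orient.Injective := by
    rintro ⟨b₁, H₁⟩ ⟨b₂, H₂⟩ h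
    obtain rfl : H₁ = H₂ := Subtype.ext ((hsub _).symm.trans ((congrArg (·.1.toSubgraph) h).trans
      (hsub _)))
    have hrev := (hF H₁).1.reverse_ne
    cases b₁ <;> cases b₂
    exacts [rfl, absurd (congrArg Subtype.val h).symm hrev,
      absurd (congrArg Subtype.val h) hrev, rfl]
  calc 2 * S.ncard = Nat.card (Bool × S) := by
        rw [Nat.card_prod, Nat.card_eq_fintype_card (α := Bool), Fintype.card_bool,
          Nat.card_coe_set_eq]
    _ ≤ _ := Nat.card_le_card_of_injective orient horient

theorem ncard_isCycleSub_mem_le [Fintype V] [DecidableRel G.Adj] (v : V) :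
    ({H : G.Subgraph | H.IsCycleSub ∧ v ∈ H.verts}.ncard : ℝ) ≤
      G.degree v / 2 * 3 ^ ((G.edgeSet.ncard : ℝ) / 3) := by
  have htwo : (2 * {H : G.Subgraph | H.IsCycleSub ∧ v ∈ H.verts}.ncard : ℝ) ≤
      Nat.card {w : G.Walk v v // w.IsCycle} := by
    exact_mod_cast two_mul_ncard_isCycleSub_le_card_isCycle v
  linarith [card_isCycle_le_degree_mul_three_rpow (G := G) v]

end SimpleGraph

theorem cycles_through_max_degree_vertex_sparse_general {V : Type*} [Fintype V] (G : SimpleGraph V)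
    [DecidableRel G.Adj] (m : ℕ)
    (hm : G.edgeSet.ncard = m)
    (v : V) (hv : G.degree v = G.maxDegree) :
    ({H : G.Subgraph | H.IsCycleSub ∧ v ∈ H.verts}.ncard : ℝ) ≤
      (G.maxDegree : ℝ) / 2 * (3 : ℝ) ^ ((m : ℝ) / 3) := by
  rw [← hv, ← hm]
  exact G.ncard_isCycleSub_mem_le v

/-- If `G` has `n ≥ 3` vertices, `m` edges, `m/(n-1) < 3`, and `v` is a vertex of
maximum degree, then the number of cycles of `G` containing `v` is at most
`(Δ(G)/2) 3^(m/3)`. -/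
theorem cycles_through_max_degree_vertex_sparse {V : Type*} [Fintype V] (G : SimpleGraph V)
    [DecidableRel G.Adj] (n m : ℕ) (hn : 3 ≤ n) (hcard : Fintype.card V = n)
    (hm : G.edgeSet.ncard = m) (hlt : (m : ℝ) / ((n : ℝ) - 1) < 3)
    (v : V) (hv : G.degree v = G.maxDegree) :
    ({H : G.Subgraph | H.IsCycleSub ∧ v ∈ H.verts}.ncard : ℝ) ≤
      (G.maxDegree : ℝ) / 2 * (3 : ℝ) ^ ((m : ℝ) / 3) :=
  cycles_through_max_degree_vertex_sparse_general G m hm v hv
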